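/- Let D be a semicomplete multipartite digraph, let P^g = u_1...u_r be a G-path and let C^g be a G-cycle in D - V(P^g). Suppose that for each i in [r-1], either u_i or the arc u_i u_{i+1} has a partner on C^g, and that u_r has a partner on C^g. Then D has a G-cycle with vertex set V(P^g) ∪ V(C^g) and length at least ℓ(P^g) + ℓ(C^g) + 1. -/

import Mathlib

open Classical

universe u v

/-- A semicomplete multipartite digraph: `A` is the arc relation and `part` assigns to
each vertex its partite set.  There are no arcs inside a partite set and at least one
arc between any two vertices of different partite sets. -/
structure IsSMD {V : Type u} {K : Type v} (A : V → V → Prop) (part : V → K) : Prop where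
  noInside : ∀ x y : V, part x = part y → ¬ A x y
  adj : ∀ x y : V, part x ≠ part y → A x y ∨ A y x

/-- An extended semicomplete digraph: a semicomplete multipartite digraph in which any
two vertices of the same partite set have identical in- and out-neighbourhoods. -/
def IsESD {V : Type u} {K : Type v} (A : V → V → Prop) (part : V → K) : Prop :=
  IsSMD A part ∧ ∀ x y : V, part x = part y →
    (∀ z, A x z ↔ A y z) ∧ (∀ z, A z x ↔ A z y)

/-- A generalized path (G-path): a sequence of distinct vertices in which each
consecutive pair is either an arc or a pair of vertices in the same partite set. -/
structure GPath {V : Type u} {K : Type v} (A : V → V → Prop) (part : V → K) where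
  verts : List V
  ne : verts ≠ []
  nodup : verts.Nodup
  chain : verts.Chain' fun a b => A a b ∨ part a = part b

/-- A generalized cycle (G-cycle): as a G-path, but also the pair consisting of the
last and the first vertex is an arc or lies in one partite set. -/
structure GCycle {V : Type u} {K : Type v} (A : V → V → Prop) (part : V → K)
    extends GPath A part where
  close : A (verts.getLast ne) (verts.head ne) ∨
    part (verts.getLast ne) = part (verts.head ne)

variable {V : Type u} {K : Type v} {A : V → V → Prop} {part : V → K}

/-- The length of a G-path: the number of arcs it uses. -/
noncomputable def GPath.len (P : GPath A part) : ℕ :=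
  (P.verts.zip P.verts.tail).countP fun q => decide (A q.1 q.2)

/-- The length of a G-cycle: the number of arcs it uses (cyclically). -/
noncomputable def GCycle.len (C : GCycle A part) : ℕ :=
  (C.toGPath.verts.zip (C.toGPath.verts.rotate 1)).countP fun q => decide (A q.1 q.2)

/-- `x` and `y` are (cyclically) consecutive on the G-cycle `C`, `y` following `x`. -/
def GCycle.consec (C : GCycle A part) (x y : V) : Prop :=
  (x, y) ∈ C.toGPath.verts.zip (C.toGPath.verts.rotate 1)

/-- The pair `(x, y)` (an `(x,y)`-G-path) has a partner on the G-cycle `C`: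
there are consecutive vertices `w, w'` of `C` with `w → x` and `y → w'`. -/
def GCycle.partner (C : GCycle A part) (x y : V) : Prop :=
  ∃ w w' : V, C.consec w w' ∧ A w x ∧ A y w'

/-- `v` is out-singular with respect to `C` (that is, `v ⇒ C`). -/
def GCycle.OutSingular (C : GCycle A part) (v : V) : Prop :=
  ∀ w ∈ C.toGPath.verts, (part v ≠ part w → A v w) ∧ ¬ A w v

/-- `v` is in-singular with respect to `C` (that is, `C ⇒ v`). -/
def GCycle.InSingular (C : GCycle A part) (v : V) : Prop :=
  ∀ w ∈ C.toGPath.verts, (part v ≠ part w → A w v) ∧ ¬ A v w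

/-- `v` is singular with respect to `C`. -/
def GCycle.SingularWrt (C : GCycle A part) (v : V) : Prop :=
  C.OutSingular v ∨ C.InSingular v

/-- `C₁ ≃> C₂`: `C₁` has singular vertices w.r.t. `C₂`, all of which are out-singular,
and `C₂` has singular vertices w.r.t. `C₁`, all of which are in-singular. -/
def SimGt (C₁ C₂ : GCycle A part) : Prop :=
  (∃ v ∈ C₁.toGPath.verts, C₂.SingularWrt v) ∧
  (∀ v ∈ C₁.toGPath.verts, C₂.SingularWrt v → C₂.OutSingular v) ∧
  (∃ v ∈ C₂.toGPath.verts, C₁.SingularWrt v) ∧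
  (∀ v ∈ C₂.toGPath.verts, C₁.SingularWrt v → C₁.InSingular v)

/-- A G-cycle subdigraph: a collection of pairwise vertex-disjoint G-cycles. -/
structure GCSub {V' : Type u} {K' : Type v} (A' : V' → V' → Prop) (part' : V' → K') where
  cycles : List (GCycle A' part')
  disj : cycles.Pairwise fun C C' => ∀ x ∈ C.toGPath.verts, x ∉ C'.toGPath.verts

/-- The total number of arcs used by a G-cycle subdigraph. -/
noncomputable def GCSub.arcs (F : GCSub A part) : ℕ :=
  (F.cycles.map GCycle.len).sum

/-- A G-cycle factor: a G-cycle subdigraph covering all vertices. -/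
def GCSub.IsFactor (F : GCSub A part) : Prop :=
  ∀ v : V, ∃ C ∈ F.cycles, v ∈ C.toGPath.verts

/-- Strong connectivity of a digraph. -/
def IsStrong (A : V → V → Prop) : Prop :=
  ∀ x y : V, Relation.ReflTransGen A x y

/-- Strong connectivity after deleting the vertex set `X`. -/
def IsStrongOutside (A : V → V → Prop) (X : Set V) : Prop :=
  ∀ x y : V, x ∉ X → y ∉ X →
    Relation.ReflTransGen (fun a b => A a b ∧ a ∉ X ∧ b ∉ X) x y

/-- `k`-strong connectivity. -/
def KStrong [Fintype V] (A : V → V → Prop) (k : ℕ) : Prop :=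
  k + 1 ≤ Fintype.card V ∧
    ∀ X : Finset V, X.card ≤ k - 1 → IsStrongOutside A (↑X : Set V)


/-! ### Auxiliary machinery for STATEMENT 4 -/

section Stmt4Aux
variable {V : Type} {K : Type}

noncomputable def ind (A : V → V → Prop) (a b : V) : ℕ := if A a b then 1 else 0

lemma ind_le_one (A : V → V → Prop) (a b : V) : ind A a b ≤ 1 := by
  unfold ind; split <;> omega

lemma ind_of (A : V → V → Prop) {a b : V} (h : A a b) : ind A a b = 1 := by
  simp [ind, h]

noncomputable def arcCount (A : V → V → Prop) (l : List V) : ℕ :=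
  (l.zip l.tail).countP fun q => decide (A q.1 q.2)

@[simp] lemma arcCount_nil (A : V → V → Prop) : arcCount A [] = 0 := by simp [arcCount]

@[simp] lemma arcCount_singleton (A : V → V → Prop) (x : V) : arcCount A [x] = 0 := by
  simp [arcCount]

lemma arcCount_cons (A : V → V → Prop) (x : V) (l : List V) (h : l ≠ []) :
    arcCount A (x :: l) = ind A x (l.head h) + arcCount A l := by
  obtain ⟨y, t, rfl⟩ := List.exists_cons_of_ne_nil h
  simp only [arcCount, List.tail_cons, List.zip_cons_cons, List.countP_cons, List.head_cons, ind]
  by_cases hA : A x y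
  · simp [hA]; omega
  · simp [hA]

lemma arcCount_append (A : V → V → Prop) (l₁ l₂ : List V) (h₁ : l₁ ≠ []) (h₂ : l₂ ≠ []) :
    arcCount A (l₁ ++ l₂) =
      arcCount A l₁ + arcCount A l₂ + ind A (l₁.getLast h₁) (l₂.head h₂) := by
  induction l₁ with
  | nil => simp at h₁
  | cons x xs ih =>
    rcases eq_or_ne xs [] with rfl | hxs
    · simp only [List.singleton_append, arcCount_singleton]
      rw [arcCount_cons A x l₂ h₂]
      simp [List.getLast]
      omega
    · rw [List.cons_append, arcCount_cons A x (xs ++ l₂) (by simp [hxs]),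
        arcCount_cons A x xs hxs, ih hxs]
      rw [List.head_append]
      simp only [List.isEmpty_iff, hxs, dite_false, List.getLast_cons hxs]
      omega

lemma arcCount_concat (A : V → V → Prop) (l : List V) (a : V) (h : l ≠ []) :
    arcCount A (l ++ [a]) = arcCount A l + ind A (l.getLast h) a := by
  rw [arcCount_append A l [a] h (by simp)]
  simp

noncomputable def weight (A : V → V → Prop) (s : List V) : ℕ :=
  if s = [] then 0 else 1 + arcCount A s

@[simp] lemma weight_nil (A : V → V → Prop) : weight A [] = 0 := by simp [weight]

lemma rotate_one (l : List V) (h : l ≠ []) : l.rotate 1 = l.tail ++ [l.head h] := by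
  obtain ⟨x, t, rfl⟩ := List.exists_cons_of_ne_nil h
  simp [List.rotate_cons_succ]

lemma zip_tail_concat (a : V) (l : List V) (hl : l ≠ []) :
    l.zip (l.tail ++ [a]) = l.zip l.tail ++ [(l.getLast hl, a)] := by
  induction l with
  | nil => simp at hl
  | cons x t ih =>
    cases t with
    | nil => simp
    | cons y s =>
      simp only [List.tail_cons, List.cons_append, List.zip_cons_cons]
      have h2 := ih (by simp)
      simp only [List.tail_cons] at h2
      rw [h2, List.getLast_cons (by simp : y :: s ≠ [])]

def Jmap (cs : List (V × List V)) : List V := cs.flatMap fun q => q.1 :: q.2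

@[simp] lemma Jmap_nil : Jmap ([] : List (V × List V)) = [] := rfl
@[simp] lemma Jmap_cons (e : V × List V) (cs : List (V × List V)) :
    Jmap (e :: cs) = e.1 :: (e.2 ++ Jmap cs) := by simp [Jmap]

lemma Jmap_append (cs ds : List (V × List V)) : Jmap (cs ++ ds) = Jmap cs ++ Jmap ds := by
  simp [Jmap]

lemma Jmap_ne {cs : List (V × List V)} (h : cs ≠ []) : Jmap cs ≠ [] := by
  obtain ⟨e, t, rfl⟩ := List.exists_cons_of_ne_nil h
  simp

lemma Jmap_head {cs : List (V × List V)} (h : cs ≠ []) :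
    (Jmap cs).head (Jmap_ne h) = (cs.head h).1 := by
  obtain ⟨e, t, rfl⟩ := List.exists_cons_of_ne_nil h
  simp

lemma Jmap_perm (cs : List (V × List V)) :
    (Jmap cs).Perm (cs.map Prod.fst ++ (cs.map Prod.snd).flatten) := by
  induction cs with
  | nil => simp [Jmap]
  | cons e t ih =>
    simp only [Jmap_cons, List.map_cons, List.flatten_cons, List.cons_append]
    refine List.Perm.cons e.1 ?_
    refine (ih.append_left e.2).trans ?_
    rw [show e.2 ++ (t.map Prod.fst ++ (t.map Prod.snd).flatten)
        = (e.2 ++ t.map Prod.fst) ++ (t.map Prod.snd).flatten from (List.append_assoc _ _ _).symm]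
    exact (List.perm_append_comm).append_right _ |>.trans (by rw [List.append_assoc])

lemma flatten_ne {L : List (List V)} (hne : L ≠ []) (hall : ∀ l ∈ L, l ≠ []) :
    L.flatten ≠ [] := by
  obtain ⟨l, t, rfl⟩ := List.exists_cons_of_ne_nil hne
  have : l ≠ [] := hall l (by simp)
  simp [this]

lemma flatten_head {L : List (List V)} (hne : L ≠ []) (hall : ∀ l ∈ L, l ≠ []) :
    L.flatten.head (flatten_ne hne hall) =
      (L.head hne).head (hall _ (List.head_mem hne)) := by
  obtain ⟨l, t, rfl⟩ := List.exists_cons_of_ne_nil hne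
  have hl : l ≠ [] := hall l (by simp)
  simp only [List.flatten_cons, List.head_cons]
  rw [List.head_append]
  simp [hl]

lemma flatten_getLast {L : List (List V)} (hne : L ≠ []) (hall : ∀ l ∈ L, l ≠ []) :
    L.flatten.getLast (flatten_ne hne hall) =
      (L.getLast hne).getLast (hall _ (List.getLast_mem hne)) := by
  induction L with
  | nil => simp at hne
  | cons l t ih =>
    cases t with
    | nil => simp
    | cons l2 t2 =>
      have htne : l2 :: t2 ≠ [] := by simp
      have hall' : ∀ x ∈ l2 :: t2, x ≠ [] := fun x hx => hall x (by simp [hx])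
      have hfne : (l2 :: t2).flatten ≠ [] := flatten_ne htne hall'
      simp only [List.flatten_cons]
      have ih' := ih htne hall'
      simp only [List.flatten_cons] at ih' ⊢
      rw [List.getLast_append_of_ne_nil _ (by simpa using hfne), ih']
      have hgl : (l :: l2 :: t2).getLast hne = (l2 :: t2).getLast htne := List.getLast_cons htne
      simp only [hgl]

lemma flatten_set_perm : ∀ (L : List (List V)) (p : ℕ) (I : List V) (hp : p < L.length),
    L[p] = [] → (L.set p I).flatten.Perm (I ++ L.flatten) := by
  intro L
  induction L with
  | nil => intro p I h; simp at h
  | cons l t ih =>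
    intro p I hp hval
    cases p with
    | zero =>
      simp only [List.getElem_cons_zero] at hval
      simp [hval]
    | succ q =>
      simp only [List.getElem_cons_succ] at hval
      simp only [List.set_cons_succ, List.flatten_cons]
      have := ih q I (by simpa using hp) hval
      refine (this.append_left l).trans ?_
      rw [show l ++ (I ++ t.flatten) = (l ++ I) ++ t.flatten from (List.append_assoc _ _ _).symm]
      refine ((List.perm_append_comm).append_right _).trans ?_
      rw [List.append_assoc]

lemma sum_set (A : V → V → Prop) : ∀ (L : List (List V)) (p : ℕ) (I : List V)
    (hp : p < L.length),
    L[p] = [] → ((L.set p I).map (weight A)).sum = (L.map (weight A)).sum + weight A I := by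
  intro L
  induction L with
  | nil => intro p I h; simp at h
  | cons l t ih =>
    intro p I hp hval
    cases p with
    | zero =>
      simp only [List.getElem_cons_zero] at hval
      simp [hval]
      omega
    | succ q =>
      simp only [List.getElem_cons_succ] at hval
      simp only [List.set_cons_succ, List.map_cons, List.sum_cons, ih q I (by simpa using hp) hval]
      omega

/-- Entry/exit condition for a segment `s` at position `i` of the cycle list `cv`. -/
def EE (A : V → V → Prop) (cv : List V) (i : ℕ) (s : List V) : Prop :=
  s ≠ [] ∧ ∃ hi : i < cv.length,
    (∀ x ∈ s.head?, A (cv[i]'(hi)) x) ∧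
    (∀ x ∈ s.getLast?, A x (cv[(i + 1) % cv.length]'(Nat.mod_lt _ (by omega))))


section Stmt4Len
variable {V : Type} {K : Type} {A : V → V → Prop} {part : V → K}


lemma gpath_len (P : GPath A part) : P.len = arcCount A P.verts := rfl

lemma gcycle_len (C : GCycle A part) :
    C.len = arcCount A C.toGPath.verts +
      ind A (C.toGPath.verts.getLast C.toGPath.ne) (C.toGPath.verts.head C.toGPath.ne) := by
  unfold GCycle.len
  rw [rotate_one _ C.toGPath.ne, zip_tail_concat _ _ C.toGPath.ne, List.countP_append]
  simp only [arcCount, ind, List.countP_singleton]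
  by_cases h : A (C.toGPath.verts.getLast C.toGPath.ne) (C.toGPath.verts.head C.toGPath.ne) <;>
    simp [h]

lemma partner_index (C : GCycle A part) {x y : V} (h : C.partner x y) :
    ∃ i, ∃ hi : i < C.toGPath.verts.length,
      A (C.toGPath.verts[i]) x ∧
        A y (C.toGPath.verts[(i + 1) % C.toGPath.verts.length]'
          (Nat.mod_lt _ (List.length_pos_iff.2 C.toGPath.ne))) := by
  obtain ⟨w, w', hc, hwx, hyw⟩ := h
  have hm : 0 < C.toGPath.verts.length := List.length_pos_iff.2 C.toGPath.ne
  unfold GCycle.consec at hc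
  rw [rotate_one _ C.toGPath.ne, zip_tail_concat _ _ C.toGPath.ne] at hc
  rcases List.mem_append.1 hc with hmem | hmem
  · obtain ⟨i, hi, heq⟩ := List.mem_iff_getElem.1 hmem
    rw [List.getElem_zip, Prod.mk.injEq] at heq
    rw [List.length_zip, List.length_tail] at hi
    have hi1 : i < C.toGPath.verts.length - 1 := lt_of_lt_of_le hi (by omega)
    have hi2 : i + 1 < C.toGPath.verts.length := by omega
    refine ⟨i, by omega, ?_, ?_⟩
    · simp only [heq.1]; exact hwx
    · simp only [Nat.mod_eq_of_lt hi2]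
      have h2 := heq.2
      rw [List.getElem_tail] at h2
      simp only [h2]; exact hyw
  · simp only [List.mem_singleton, Prod.mk.injEq] at hmem
    refine ⟨C.toGPath.verts.length - 1, by omega, ?_, ?_⟩
    · rw [← List.getLast_eq_getElem C.toGPath.ne, ← hmem.1]; exact hwx
    · have : (C.toGPath.verts.length - 1 + 1) % C.toGPath.verts.length = 0 := by
        rw [Nat.sub_add_cancel hm, Nat.mod_self]
      simp only [this]
      rw [List.getElem_zero, ← hmem.2]
      exact hyw


end Stmt4Len

section Stmt4St2
variable {V : Type} {K : Type}

lemma stage2 (A : V → V → Prop) (cv ubase : List V) :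
    ∀ (n : ℕ) (bl : List (List V × ℕ)), bl.length ≤ n →
    (∀ e ∈ bl, EE A cv e.2 e.1) →
    ((bl.map Prod.fst).flatten <:+: ubase) →
    ∃ segs : List (List V),
      segs.length = cv.length ∧
      segs.flatten.Perm ((bl.map Prod.fst).flatten) ∧
      (bl ≠ [] → arcCount A ((bl.map Prod.fst).flatten) + 1 ≤ (segs.map (weight A)).sum) ∧
      (∀ i (hi : i < segs.length), segs[i] ≠ [] →
        EE A cv i segs[i] ∧ segs[i] <:+: ubase ∧ i ∈ bl.map Prod.snd) := by
  intro n
  induction n with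
  | zero =>
    intro bl hlen _ _
    have hbl : bl = [] := List.length_eq_zero_iff.1 (Nat.le_zero.1 hlen)
    subst hbl
    refine ⟨List.replicate cv.length [], by simp, by simp, by simp, ?_⟩
    intro i hi hne
    simp at hne
  | succ n ihn =>
    intro bl hlen hQ hinf
    rcases eq_or_ne bl [] with rfl | hbl
    · refine ⟨List.replicate cv.length [], by simp, by simp, by simp, ?_⟩
      intro i hi hne
      simp at hne
    · have hbl' : bl ≠ [] := hbl
      set p := (bl.getLast hbl).2 with hp_def
      set pred : List V × ℕ → Bool := fun e => e.2 != p with hpred_def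
      set bl₁ := bl.takeWhile pred with hbl1_def
      set blrun := bl.dropWhile pred with hblrun_def
      have happ : bl₁ ++ blrun = bl :=
        List.takeWhile_append_dropWhile (p := pred) (l := bl)
      have hrun_ne : blrun ≠ [] := by
        intro h
        rw [hblrun_def, List.dropWhile_eq_nil_iff] at h
        have := h _ (List.getLast_mem hbl)
        simp [hpred_def] at this
        exact this hp_def.symm
      have hheadrun : (blrun.head hrun_ne).2 = p := by
        have hb : pred (blrun.head hrun_ne) = false :=
          List.head_dropWhile_not pred hrun_ne
        simpa [hpred_def] using hb
      have hlastrun : blrun.getLast hrun_ne = bl.getLast hbl := by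
        have h1 : blrun.getLast? = bl.getLast? := by
          conv_rhs => rw [← happ]
          rw [List.getLast?_append_of_ne_nil _ hrun_ne]
        rw [List.getLast?_eq_getLast hrun_ne, List.getLast?_eq_getLast hbl] at h1
        exact Option.some.inj h1
      have hmem1 : ∀ e ∈ bl₁, e.2 ≠ p := by
        intro e he
        have := List.mem_takeWhile_imp he
        simpa [hpred_def] using this
      have hmem1' : ∀ e ∈ bl₁, e ∈ bl := by
        intro e he; rw [← happ]; exact List.mem_append_left _ he
      have hmemrun : ∀ e ∈ blrun, e ∈ bl := by
        intro e he; rw [← happ]; exact List.mem_append_right _ he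
      have hlen1 : bl₁.length ≤ n := by
        have := congrArg List.length happ
        rw [List.length_append] at this
        have h2 : 0 < blrun.length := List.length_pos_iff.2 hrun_ne
        omega
      have hflat : ((bl.map Prod.fst).flatten) =
          ((bl₁.map Prod.fst).flatten) ++ ((blrun.map Prod.fst).flatten) := by
        rw [← happ, List.map_append, List.flatten_append]
      have hinf1 : (bl₁.map Prod.fst).flatten <:+: ubase :=
        (List.IsPrefix.isInfix ⟨(blrun.map Prod.fst).flatten, hflat.symm⟩).trans hinf
      obtain ⟨segs₁, hlen₁, hperm₁, hcount₁, hpt₁⟩ :=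
        ihn bl₁ hlen1 (fun e he => hQ e (hmem1' e he)) hinf1
      -- the merged segment
      have hallrun : ∀ l ∈ blrun.map Prod.fst, l ≠ [] := by
        intro l hl
        obtain ⟨e, he, rfl⟩ := List.mem_map.1 hl
        exact (hQ e (hmemrun e he)).1
      have hrunmapne : blrun.map Prod.fst ≠ [] := by simpa using hrun_ne
      set I := (blrun.map Prod.fst).flatten with hI_def
      have hIne : I ≠ [] := flatten_ne hrunmapne hallrun
      have hplt : p < cv.length := by
        obtain ⟨-, hi, -⟩ := hQ _ (List.getLast_mem hbl)
        exact hi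
      have hpseg : p < segs₁.length := by omega
      have hseg1p : segs₁[p] = [] := by
        by_contra hne
        obtain ⟨-, -, hmem⟩ := hpt₁ p hpseg hne
        obtain ⟨e, he, heq⟩ := List.mem_map.1 hmem
        exact hmem1 e he heq
      refine ⟨segs₁.set p I, by simp [hlen₁], ?_, ?_, ?_⟩
      · -- perm
        refine (flatten_set_perm segs₁ p I hpseg hseg1p).trans ?_
        rw [hflat]
        exact (hperm₁.append_left I).trans List.perm_append_comm
      · -- count
        intro _
        rw [sum_set A segs₁ p I hpseg hseg1p, hflat]
        have hwI : weight A I = 1 + arcCount A I := by simp [weight, hIne]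
        rcases eq_or_ne bl₁ [] with h1 | h1
        · simp [h1, hwI]
          omega
        · have hflat1ne : (bl₁.map Prod.fst).flatten ≠ [] := by
            refine flatten_ne (by simpa using h1) ?_
            intro l hl
            obtain ⟨e, he, rfl⟩ := List.mem_map.1 hl
            exact (hQ e (hmem1' e he)).1
          rw [arcCount_append A _ _ hflat1ne hIne]
          have := hcount₁ h1
          have := ind_le_one A ((bl₁.map Prod.fst).flatten.getLast hflat1ne) (I.head hIne)
          omega
      · -- pointwise
        intro i hi hne
        rw [List.length_set] at hi
        rcases eq_or_ne p i with rfl | hpi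
        · have hgi : (segs₁.set p I)[p] = I := by simp [List.getElem_set]
          rw [hgi] at hne ⊢
          refine ⟨⟨hIne, hplt, ?_, ?_⟩, ?_, ?_⟩
          · intro x hx
            rw [List.head?_eq_head hIne, Option.mem_some_iff] at hx
            subst hx
            obtain ⟨hbne, hilt, hentry, -⟩ := hQ _ (hmemrun _ (List.head_mem hrun_ne))
            have h5 := hentry _ (by
              rw [List.head?_eq_head hbne]; rfl :
              ((blrun.head hrun_ne).1.head hbne) ∈ _)
            have h6 : I.head hIne = (blrun.head hrun_ne).1.head hbne := by
              rw [flatten_head hrunmapne hallrun]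
              congr 1
              exact List.head_map _
            rw [h6]
            have h7 : cv[(blrun.head hrun_ne).2]'(hilt) = cv[p]'(hplt) := by
              congr 1
            rw [← h7]
            exact h5
          · intro x hx
            rw [List.getLast?_eq_getLast hIne, Option.mem_some_iff] at hx
            subst hx
            obtain ⟨hbne, hilt, -, hexit⟩ := hQ _ (List.getLast_mem hbl')
            have h5 := hexit _ (by
              rw [List.getLast?_eq_getLast hbne]; rfl :
              ((bl.getLast hbl').1.getLast hbne) ∈ _)
            have h6 : I.getLast hIne = (bl.getLast hbl').1.getLast hbne := by
              rw [flatten_getLast hrunmapne hallrun]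
              have h8 : (blrun.map Prod.fst).getLast hrunmapne = (blrun.getLast hrun_ne).1 :=
                List.getLast_map _
              have h9 : blrun.getLast hrun_ne = bl.getLast hbl' := hlastrun
              congr 1
              rw [h8, h9]
            rw [h6]
            have h7 : ((bl.getLast hbl').2 + 1) % cv.length = (p + 1) % cv.length := by
              rw [← hp_def]
            have h10 : cv[((bl.getLast hbl').2 + 1) % cv.length]'(Nat.mod_lt _ (by omega))
                = cv[(p + 1) % cv.length]'(Nat.mod_lt _ (by omega)) := by
              congr 1
            rw [← h10]
            exact h5
          · exact List.IsSuffix.isInfix ⟨(bl₁.map Prod.fst).flatten, hflat.symm⟩ |>.trans hinf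
          · exact List.mem_map.2 ⟨bl.getLast hbl, List.getLast_mem hbl, rfl⟩
        · have hgi : (segs₁.set p I)[i] = segs₁[i] := by
            rw [List.getElem_set]; simp [hpi]
          rw [hgi] at hne ⊢
          obtain ⟨hEE, hinfseg, hmem⟩ := hpt₁ i (by omega) hne
          refine ⟨hEE, hinfseg, ?_⟩
          obtain ⟨e, he, heq⟩ := List.mem_map.1 hmem
          exact List.mem_map.2 ⟨e, hmem1' e he, heq⟩

end Stmt4St2

section Stmt4Core
variable {V : Type} {K : Type}

lemma core (A : V → V → Prop) (part : V → K) :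
    ∀ cs : List (V × List V), ∀ hne : cs ≠ [],
    (∀ e ∈ cs, e.2 ≠ [] → e.2.Chain' fun a b => A a b ∨ part a = part b) →
    cs.Chain' (fun e f =>
      (e.2 = [] → (A e.1 f.1 ∨ part e.1 = part f.1)) ∧
      ∀ h : e.2 ≠ [], A e.1 (e.2.head h) ∧ A (e.2.getLast h) f.1) →
    (cs.getLast hne).2 = [] →
    (Jmap cs).Chain' (fun a b => A a b ∨ part a = part b) ∧
    arcCount A (cs.map Prod.fst) + (cs.map fun e => weight A e.2).sum ≤ arcCount A (Jmap cs) := by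
  intro cs
  induction cs with
  | nil => intro hne; exact absurd rfl hne
  | cons e t ih =>
    intro hne hQ hlk hlast
    cases t with
    | nil =>
      have he2 : e.2 = [] := hlast
      simp [List.Chain', Jmap_cons, he2, weight, arcCount_singleton, arcCount_nil]
    | cons f rest =>
      have htne : f :: rest ≠ [] := by simp
      have hlk' := (List.isChain_cons_cons.1 hlk)
      have hlink := hlk'.1
      obtain ⟨ihchain, ihcount⟩ := ih htne (fun x hx h2 => hQ x (by simp [hx]) h2) hlk'.2
        (by rwa [List.getLast_cons htne] at hlast)
      have hJne : Jmap (f :: rest) ≠ [] := Jmap_ne htne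
      have hJhead : (Jmap (f :: rest)).head hJne = f.1 := Jmap_head htne
      constructor
      · -- chain'
        rw [Jmap_cons, show e.1 :: (e.2 ++ Jmap (f :: rest)) =
          (e.1 :: e.2) ++ Jmap (f :: rest) by simp]
        rw [List.Chain', List.isChain_append]
        refine ⟨?_, ihchain, ?_⟩
        · rcases eq_or_ne e.2 [] with h2 | h2
          · simp [h2]
          · rw [List.isChain_cons]
            refine ⟨fun y hy => ?_, hQ e (by simp) h2⟩
            rw [List.head?_eq_head h2] at hy
            cases hy
            exact Or.inl ((hlink.2 h2).1)
        · intro x hx y hy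
          rw [List.head?_eq_head hJne, hJhead] at hy
          cases hy
          rcases eq_or_ne e.2 [] with h2 | h2
          · simp [h2, List.getLast?_singleton] at hx
            cases hx
            exact hlink.1 h2
          · rw [show e.1 :: e.2 = [e.1] ++ e.2 by simp, List.getLast?_append_of_ne_nil _ h2,
              List.getLast?_eq_getLast h2] at hx
            cases hx
            exact Or.inl ((hlink.2 h2).2)
      · -- count
        rw [Jmap_cons, show e.1 :: (e.2 ++ Jmap (f :: rest)) =
          (e.1 :: e.2) ++ Jmap (f :: rest) by simp]
        rw [arcCount_append A _ _ (by simp) hJne, hJhead]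
        have hmapcons : ((e :: f :: rest).map Prod.fst) = e.1 :: (f :: rest).map Prod.fst := rfl
        rw [hmapcons, arcCount_cons A e.1 _ (by simp),
          show (((f :: rest).map Prod.fst).head (by simp)) = f.1 by simp]
        have hsum : (List.map (fun e => weight A e.2) (e :: f :: rest)).sum =
            weight A e.2 + (List.map (fun e => weight A e.2) (f :: rest)).sum := by
          simp
        rw [hsum]
        rcases eq_or_ne e.2 [] with h2 | h2
        · have h1 : ind A e.1 f.1 ≤ 1 := ind_le_one A e.1 f.1
          rw [show weight A e.2 = 0 by simp [weight, h2], h2, arcCount_singleton A]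
          rw [show ((e.1 :: ([] : List V)).getLast (by simp)) = e.1 by simp]
          omega
        · have hentry := (hlink.2 h2).1
          have hexit := (hlink.2 h2).2
          rw [arcCount_cons A e.1 e.2 h2, ind_of A hentry,
            show (e.1 :: e.2).getLast (by simp) = e.2.getLast h2 from List.getLast_cons h2,
            ind_of A hexit]
          have h1 : ind A e.1 f.1 ≤ 1 := ind_le_one A e.1 f.1
          rw [show weight A e.2 = 1 + arcCount A e.2 by simp [weight, h2]]
          omega

end Stmt4Core

end Stmt4Aux

/-- If `P = u_1 ⋯ u_r` is a G-path and `C` a G-cycle disjoint from it such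
that for each `i < r` either `u_i` or the arc `u_i u_{i+1}` has a partner on `C`, and
`u_r` has a partner on `C`, then there is a G-cycle on `V(P) ∪ V(C)` with at least
`ℓ(P) + ℓ(C) + 1` arcs. -/
theorem stmt4 {V K : Type} {A : V → V → Prop} {part : V → K}
    (hSMD : IsSMD A part) (P : GPath A part) (C : GCycle A part)
    (hdisj : ∀ x ∈ P.verts, x ∉ C.toGPath.verts)
    (hpartners : ∀ (i : ℕ) (h : i + 1 < P.verts.length),
      C.partner (P.verts.get ⟨i, by omega⟩) (P.verts.get ⟨i, by omega⟩) ∨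
        (A (P.verts.get ⟨i, by omega⟩) (P.verts.get ⟨i + 1, h⟩) ∧
          C.partner (P.verts.get ⟨i, by omega⟩) (P.verts.get ⟨i + 1, h⟩)))
    (hlast : C.partner (P.verts.getLast P.ne) (P.verts.getLast P.ne)) :
    ∃ C' : GCycle A part,
      (∀ v : V, v ∈ C'.toGPath.verts ↔ v ∈ P.verts ∨ v ∈ C.toGPath.verts) ∧
      P.len + C.len + 1 ≤ C'.len := by
  classical
  have hm : C.toGPath.verts ≠ [] := C.toGPath.ne
  have hmlen : 0 < C.toGPath.verts.length := List.length_pos_iff.2 hm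
  -- Stage 1 : cut P into blocks of size 1 or 2, each with an entry/exit position on C
  have stage1 : ∀ k, ∀ i, i + k = P.verts.length → i < P.verts.length →
      ∃ bl : List (List V × ℕ),
        (∀ e ∈ bl, EE A C.toGPath.verts e.2 e.1) ∧
        (bl.map Prod.fst).flatten = P.verts.drop i := by
    intro k
    induction k using Nat.strong_induction_on with
    | _ k ih =>
      intro i hik hi
      rcases eq_or_ne (i + 1) P.verts.length with hl1 | hne1
      · -- i is the last index
        have hgl : P.verts.getLast P.ne = P.verts[i] := by
          rw [List.getLast_eq_getElem]
          congr 1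
          omega
        have hpart : C.partner (P.verts[i]) (P.verts[i]) := by rw [← hgl]; exact hlast
        obtain ⟨j, hj, hA1, hA2⟩ := partner_index C hpart
        refine ⟨[([P.verts[i]], j)], ?_, ?_⟩
        · rintro e he
          simp only [List.mem_singleton] at he
          subst he
          refine ⟨by simp, hj, ?_, ?_⟩
          · intro x hx
            simp only [List.head?_cons, Option.mem_some_iff] at hx
            subst hx
            exact hA1
          · intro x hx
            simp only [List.getLast?_singleton, Option.mem_some_iff] at hx
            subst hx
            exact hA2
        · simp only [List.map_cons, List.map_nil, List.flatten_cons, List.flatten_nil,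
            List.append_nil]
          rw [List.drop_eq_getElem_cons hi, hl1, List.drop_length]
      · have hi1 : i + 1 < P.verts.length := by omega
        have hp := hpartners i hi1
        simp only [List.get_eq_getElem] at hp
        rcases hp with hcase | ⟨-, hpart⟩
        · -- singleton block at i
          obtain ⟨j, hj, hA1, hA2⟩ := partner_index C hcase
          obtain ⟨bl', hQ', hflat'⟩ := ih (k - 1) (by omega) (i + 1) (by omega) hi1
          refine ⟨([P.verts[i]], j) :: bl', ?_, ?_⟩
          · rintro e he
            rcases List.mem_cons.1 he with rfl | he'
            · refine ⟨by simp, hj, ?_, ?_⟩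
              · intro x hx
                simp only [List.head?_cons, Option.mem_some_iff] at hx
                subst hx
                exact hA1
              · intro x hx
                simp only [List.getLast?_singleton, Option.mem_some_iff] at hx
                subst hx
                exact hA2
            · exact hQ' e he'
          · simp only [List.map_cons, List.flatten_cons]
            rw [hflat', List.drop_eq_getElem_cons hi]
            simp
        · -- block [u_i, u_{i+1}]
          obtain ⟨j, hj, hA1, hA2⟩ := partner_index C hpart
          have hEEp : EE A C.toGPath.verts j [P.verts[i], P.verts[i + 1]] := by
            refine ⟨by simp, hj, ?_, ?_⟩
            · intro x hx
              simp only [List.head?_cons, Option.mem_some_iff] at hx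
              subst hx
              exact hA1
            · intro x hx
              simp only [List.getLast?_cons_cons, List.getLast?_singleton,
                Option.mem_some_iff] at hx
              subst hx
              exact hA2
          rcases eq_or_ne (i + 2) P.verts.length with hl2 | hne2
          · refine ⟨[([P.verts[i], P.verts[i + 1]], j)], ?_, ?_⟩
            · rintro e he
              simp only [List.mem_singleton] at he
              subst he
              exact hEEp
            · simp only [List.map_cons, List.map_nil, List.flatten_cons, List.flatten_nil,
                List.append_nil]
              rw [List.drop_eq_getElem_cons hi, List.drop_eq_getElem_cons hi1, hl2,
                List.drop_length]
          · have hi2 : i + 2 < P.verts.length := by omega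
            obtain ⟨bl', hQ', hflat'⟩ := ih (k - 2) (by omega) (i + 2) (by omega) hi2
            refine ⟨([P.verts[i], P.verts[i + 1]], j) :: bl', ?_, ?_⟩
            · rintro e he
              rcases List.mem_cons.1 he with rfl | he'
              · exact hEEp
              · exact hQ' e he'
            · simp only [List.map_cons, List.flatten_cons]
              rw [hflat', List.drop_eq_getElem_cons hi, List.drop_eq_getElem_cons hi1]
              simp
  obtain ⟨bl, hQbl, hflatbl⟩ := stage1 P.verts.length 0 (by omega) (List.length_pos_iff.2 P.ne)
  rw [List.drop_zero] at hflatbl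
  have hblne : bl ≠ [] := by
    rintro rfl
    exact P.ne (by simpa using hflatbl.symm)
  obtain ⟨segs, hslen, hsperm, hscount', hspt⟩ :=
    stage2 A C.toGPath.verts P.verts bl.length bl le_rfl hQbl
      (by rw [hflatbl])
  rw [hflatbl] at hsperm
  have hscount := hscount' hblne
  rw [hflatbl] at hscount
  clear hscount' hflatbl hQbl
  set cv := C.toGPath.verts with hcv_def
  -- assembly
  have hzlen : (cv.zip segs).length = cv.length := by
    rw [List.length_zip, hslen, min_self]
  have hzne : cv.zip segs ≠ [] := by
    rw [← List.length_pos_iff, hzlen]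
    exact hmlen
  set cs : List (V × List V) := cv.zip segs ++ [(cv.head hm, [])] with hcs_def
  have hcsne : cs ≠ [] := by simp [hcs_def]
  -- chain' of segments
  have hQcs : ∀ e ∈ cs, e.2 ≠ [] → e.2.Chain' (fun a b => A a b ∨ part a = part b) := by
    intro e he hene
    rcases List.mem_append.1 (hcs_def ▸ he) with hz | hz
    · obtain ⟨i, hilt, hieq⟩ := List.mem_iff_getElem.1 hz
      rw [List.getElem_zip] at hieq
      have hisegs : i < segs.length := by
        rw [List.length_zip] at hilt
        omega
      have he2 : e.2 = segs[i] := by rw [← hieq]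
      rw [he2] at hene ⊢
      obtain ⟨-, hinfix, -⟩ := hspt i hisegs hene
      exact P.chain.infix hinfix
    · simp only [List.mem_singleton] at hz
      rw [hz] at hene
      simp at hene
  -- the linking chain condition
  have hlink : cs.Chain' (fun e f =>
      (e.2 = [] → (A e.1 f.1 ∨ part e.1 = part f.1)) ∧
      ∀ h : e.2 ≠ [], A e.1 (e.2.head h) ∧ A (e.2.getLast h) f.1) := by
    rw [hcs_def, List.Chain', List.isChain_append]
    refine ⟨?_, by simp, ?_⟩
    · -- chain inside the zip
      rw [List.isChain_iff_getElem]
      intro i hilen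
      rw [hzlen] at hilen
      have hi1 : i + 1 < cv.length := by omega
      simp only [List.get_eq_getElem, List.getElem_zip]
      constructor
      · intro h2
        have hcc := List.isChain_iff_getElem.1 C.toGPath.chain i (by rw [← hcv_def]; omega)
        simpa [← hcv_def] using hcc
      · intro h2
        obtain ⟨-, hilt2, hentry, hexit⟩ := (hspt i (by omega) h2).1
        refine ⟨hentry _ (by rw [List.head?_eq_head h2]; rfl), ?_⟩
        have h5 := hexit _ (by rw [List.getLast?_eq_getLast h2]; rfl)
        have h6 : (i + 1) % cv.length = i + 1 := Nat.mod_eq_of_lt hi1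
        simp only [h6] at h5
        exact h5
    · -- boundary : last of zip, then the closing copy of the head
      intro x hx y hy
      simp only [List.head?_cons, Option.mem_some_iff] at hy
      subst hy
      rw [List.getLast?_eq_getLast hzne, Option.mem_some_iff] at hx
      subst hx
      have hgl : (cv.zip segs).getLast hzne =
          (cv[cv.length - 1]'(by omega), segs[cv.length - 1]'(by omega)) := by
        rw [List.getLast_eq_getElem, List.getElem_zip]
        simp only [hzlen]
      rw [hgl]
      have hlast0 : (cv.length - 1 + 1) % cv.length = 0 := by
        rw [Nat.sub_add_cancel hmlen, Nat.mod_self]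
      constructor
      · intro h2
        have hcl := C.close
        have hgl2 : cv[cv.length - 1]'(by omega) = cv.getLast hm := by
          rw [List.getLast_eq_getElem]
        rw [hgl2]
        exact hcl
      · intro h2
        obtain ⟨-, hilt2, hentry, hexit⟩ := (hspt (cv.length - 1) (by omega) h2).1
        refine ⟨hentry _ (by rw [List.head?_eq_head h2]; rfl), ?_⟩
        have h5 := hexit _ (by rw [List.getLast?_eq_getLast h2]; rfl)
        simp only [hlast0] at h5
        rw [List.getElem_zero] at h5
        exact h5
  have hlastnil : (cs.getLast hcsne).2 = [] := by
    have h1 : cs.getLast? = some (cv.head hm, []) := by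
      rw [hcs_def, List.getLast?_append_of_ne_nil _ (by simp)]
      simp
    rw [List.getLast?_eq_getLast hcsne, Option.some_inj] at h1
    rw [h1]
  obtain ⟨hchainJ, hcountJ⟩ := core A part cs hcsne hQcs hlink hlastnil
  have hJsplit : Jmap cs = Jmap (cv.zip segs) ++ [cv.head hm] := by
    rw [hcs_def, Jmap_append]
    simp [Jmap]
  have hJne : Jmap (cv.zip segs) ≠ [] := Jmap_ne hzne
  have hJhead : (Jmap (cv.zip segs)).head hJne = cv.head hm := by
    rw [Jmap_head hzne]
    have h1 : (cv.zip segs).head hzne = (cv[0]'hmlen, segs[0]'(by omega)) := by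
      rw [List.head_eq_getElem, List.getElem_zip]
    rw [h1]
    exact List.getElem_zero hmlen
  rw [hJsplit] at hchainJ
  have hchain' : (Jmap (cv.zip segs)).Chain' (fun a b => A a b ∨ part a = part b) :=
    hchainJ.prefix ⟨[cv.head hm], rfl⟩
  have hclose : A ((Jmap (cv.zip segs)).getLast hJne) ((Jmap (cv.zip segs)).head hJne) ∨
      part ((Jmap (cv.zip segs)).getLast hJne) = part ((Jmap (cv.zip segs)).head hJne) := by
    have h1 := (List.isChain_append.1 hchainJ).2.2
    have h2 := h1 _ (by rw [List.getLast?_eq_getLast hJne]; rfl) (cv.head hm)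
      (by rw [List.head?_cons]; rfl)
    rw [hJhead]
    exact h2
  have hfst : (cv.zip segs).map Prod.fst = cv := List.map_fst_zip (by omega)
  have hsnd : (cv.zip segs).map Prod.snd = segs := List.map_snd_zip (by omega)
  have hpermJ : (Jmap (cv.zip segs)).Perm (cv ++ P.verts) := by
    refine (Jmap_perm _).trans ?_
    rw [hfst, hsnd]
    exact List.Perm.append_left cv hsperm
  have hnodup : (Jmap (cv.zip segs)).Nodup := by
    rw [hpermJ.nodup_iff, List.nodup_append]
    exact ⟨C.toGPath.nodup, P.nodup, fun a ha b hb hab => hdisj b hb (hab ▸ ha)⟩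
  refine ⟨⟨⟨Jmap (cv.zip segs), hJne, hnodup, hchain'⟩, hclose⟩, ?_, ?_⟩
  · intro v
    rw [show (GCycle.mk ⟨Jmap (cv.zip segs), hJne, hnodup, hchain'⟩ hclose).toGPath.verts
      = Jmap (cv.zip segs) from rfl]
    rw [hpermJ.mem_iff, List.mem_append]
    tauto
  · -- the length estimate
    have e1 : GCycle.len (A := A) (part := part) ⟨⟨Jmap (cv.zip segs), hJne, hnodup, hchain'⟩, hclose⟩
        = arcCount A (Jmap cs) := by
      rw [gcycle_len]
      dsimp only
      rw [hJsplit, arcCount_concat A _ _ hJne, hJhead]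
    have e2 : C.len = arcCount A cv + ind A (cv.getLast hm) (cv.head hm) := gcycle_len C
    have e3 : P.len = arcCount A P.verts := rfl
    have hmapfst : cs.map Prod.fst = cv ++ [cv.head hm] := by
      rw [hcs_def, List.map_append, hfst]
      simp
    have hcva : arcCount A (cs.map Prod.fst) =
        arcCount A cv + ind A (cv.getLast hm) (cv.head hm) := by
      rw [hmapfst, arcCount_concat A _ _ hm]
    have hwsum : (cs.map fun e => weight A e.2).sum = (segs.map (weight A)).sum := by
      rw [hcs_def, List.map_append, List.sum_append]
      have h1 : (cv.zip segs).map (fun e => weight A e.2) = segs.map (weight A) := by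
        rw [show (fun (e : V × List V) => weight A e.2)
            = (weight A) ∘ Prod.snd from rfl, ← List.map_map, hsnd]
      rw [h1]
      simp
    rw [e1, e2, e3]
    rw [hcva, hwsum] at hcountJ
    omega
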